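/- arXiv:2208.02664 — 8 statements merged into one kernel-verified Lean document; each statement's English description precedes it below -/
import Mathlib

section
/- Let P be a finite poset on n elements such that the minimum vertex cover of its comparability graph has size at least (1 − α)n, for a constant α ∈ (0,1) with αn a positive integer. Then the number of antichains of P is at most (1 + 1/α)^{αn}. -/
/-!
If every vertex cover of the comparability graph has at least `(1 - α) n` vertices then, since the
complement of an antichain is a vertex cover, every antichain has at most `k = α n` elements. By
Dilworth's theorem, in Galvin's inductive form, `P` is then a union of `k` disjoint chains
`C₁, …, Cₖ`. An antichain meets each chain in at most one point, so there are at most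
`∏ (|Cᵢ| + 1)` antichains, and by AM-GM this is at most `((n + k) / k) ^ k = (1 + 1 / α) ^ (α n)`.
-/

open Real Finset

lemma card_powerset_filter_card_le_one {α : Type*} [DecidableEq α] (s : Finset α) :
    #{B ∈ s.powerset | #B ≤ 1} = #s + 1 := by
  rw [show {B ∈ s.powerset | #B ≤ 1} = s.powersetCard 0 ∪ s.powersetCard 1 by
    ext B
    simp only [mem_filter, mem_powerset, mem_union, mem_powersetCard,
      Nat.le_one_iff_eq_zero_or_eq_one, and_or_left]]
  rw [card_union_of_disjoint, card_powersetCard, card_powersetCard]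
  · simp [add_comm]
  · exact disjoint_left.2 fun B h0 h1 => by simp_all [mem_powersetCard]

lemma prod_le_sum_div_card_pow {ι : Type*} (s : Finset ι) (z : ι → ℝ) (hz : ∀ i ∈ s, 0 ≤ z i) :
    ∏ i ∈ s, z i ≤ ((∑ i ∈ s, z i) / #s) ^ #s := by
  rcases s.eq_empty_or_nonempty with rfl | hs
  · simp
  have hamgm := geom_mean_le_arith_mean s (fun _ => 1) z (fun _ _ => zero_le_one)
    (by simpa using hs) hz
  simp only [rpow_one, sum_const, nsmul_eq_mul, mul_one, one_mul] at hamgm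
  calc ∏ i ∈ s, z i = ((∏ i ∈ s, z i) ^ (#s : ℝ)⁻¹) ^ #s :=
        (rpow_inv_natCast_pow (prod_nonneg hz) hs.card_pos.ne').symm
    _ ≤ ((∑ i ∈ s, z i) / #s) ^ #s :=
        pow_le_pow_left₀ (rpow_nonneg (prod_nonneg hz) _) hamgm _

lemma IsAntichain.mem_compl_or_mem_compl {V : Type*} [Preorder V] [Fintype V] [DecidableEq V]
    {A : Finset V} (hA : IsAntichain (· ≤ ·) (A : Set V)) {u v : V} (huv : u < v) :
    u ∈ Aᶜ ∨ v ∈ Aᶜ := by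
  by_contra! h
  simp only [mem_compl, not_not] at h
  exact huv.ne (hA.eq h.1 h.2 huv.le)

section Dilworth

variable {V : Type*} [PartialOrder V] {S : Finset V} {k : ℕ} {c : V → ℕ}

def WidthLE (S : Finset V) (k : ℕ) : Prop :=
  ∀ A ⊆ S, IsAntichain (· ≤ ·) (A : Set V) → #A ≤ k

/-- Colors live in `ℕ` rather than `Fin k` so that `∅` has a `0`-coloring even when `V` is
nonempty. -/
def IsChainColoring (S : Finset V) (k : ℕ) (c : V → ℕ) : Prop :=
  (∀ x ∈ S, c x < k) ∧ ∀ x ∈ S, ∀ y ∈ S, c x = c y → x ≤ y ∨ y ≤ x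

lemma WidthLE.mono {T : Finset V} (hw : WidthLE S k) (hTS : T ⊆ S) : WidthLE T k :=
  fun A hA => hw A (hA.trans hTS)

lemma WidthLE.one_le {a : V} (hw : WidthLE S k) (ha : a ∈ S) : 1 ≤ k := by
  simpa using hw {a} (singleton_subset_iff.2 ha) (by simp)

lemma IsChainColoring.injOn (hc : IsChainColoring S k c) {A : Finset V} (hAS : A ⊆ S)
    (hA : IsAntichain (· ≤ ·) (A : Set V)) : Set.InjOn c A := fun x hx y hy hxy =>
  (hc.2 x (hAS hx) y (hAS hy) hxy).elim (hA.eq hx hy) fun h => (hA.eq hy hx h).symm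

lemma IsChainColoring.exists_mem_color (hc : IsChainColoring S k c) {A : Finset V} (hAS : A ⊆ S)
    (hA : IsAntichain (· ≤ ·) (A : Set V)) (hcard : #A = k) {i : ℕ} (hi : i < k) :
    ∃ x ∈ A, c x = i := by
  classical
  have himage : A.image c = range k :=
    eq_of_subset_of_card_le
      (fun j hj => by
        obtain ⟨x, hx, rfl⟩ := mem_image.1 hj
        exact mem_range.2 (hc.1 x (hAS hx)))
      (by rw [card_image_of_injOn (hc.injOn hAS hA), card_range, hcard])
  exact mem_image.1 (himage ▸ mem_range.2 hi)

lemma IsChainColoring.extend_by_chain [DecidableEq V] {K : Finset V}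
    (hc : IsChainColoring (S \ K) k c) (hK : IsChain (· ≤ ·) (K : Set V)) :
    IsChainColoring S (k + 1) (fun x => if x ∈ K then k else c x) := by
  refine ⟨fun x hx => ?_, fun x hx y hy hxy => ?_⟩
  · dsimp only
    split_ifs with hxK
    · exact k.lt_succ_self
    · exact (hc.1 x (mem_sdiff.2 ⟨hx, hxK⟩)).trans k.lt_succ_self
  · by_cases hxK : x ∈ K <;> by_cases hyK : y ∈ K <;> simp only [hxK, hyK, if_true, if_false] at hxy
    · exact hK.total hxK hyK
    · exact absurd hxy (hc.1 y (mem_sdiff.2 ⟨hy, hyK⟩)).ne'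
    · exact absurd hxy (hc.1 x (mem_sdiff.2 ⟨hx, hxK⟩)).ne
    · exact hc.2 x (mem_sdiff.2 ⟨hx, hxK⟩) y (mem_sdiff.2 ⟨hy, hyK⟩) hxy

def InWideAntichain (S : Finset V) (k : ℕ) (x : V) : Prop :=
  ∃ B ⊆ S, IsAntichain (· ≤ ·) (B : Set V) ∧ #B = k ∧ x ∈ B

lemma InWideAntichain.mem {x : V} (hx : InWideAntichain S k x) : x ∈ S :=
  hx.elim fun _ ⟨hBS, _, _, hxB⟩ => hBS hxB

def IsColorTop (S : Finset V) (k : ℕ) (c : V → ℕ) (t : V) : Prop :=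
  InWideAntichain S k t ∧ ∀ y, InWideAntichain S k y → c y = c t → y ≤ t

lemma IsColorTop.exists_le_mem {t : V} (ht : IsColorTop S k c t) (hc : IsChainColoring S k c)
    {B : Finset V} (hBS : B ⊆ S) (hB : IsAntichain (· ≤ ·) (B : Set V)) (hcard : #B = k) :
    ∃ z ∈ B, c z = c t ∧ z ≤ t := by
  obtain ⟨z, hzB, hz⟩ := hc.exists_mem_color hBS hB hcard (hc.1 t ht.1.mem)
  exact ⟨z, hzB, hz, ht.2 z ⟨B, hBS, hB, hcard, hzB⟩ hz⟩

lemma IsChainColoring.isAntichain_setOf_isColorTop (hc : IsChainColoring S k c) :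
    IsAntichain (· ≤ ·) {t | IsColorTop S k c t} := by
  intro t ht t' ht' hne hle
  obtain ⟨B, hBS, hB, hcard, ht'B⟩ := ht'.1
  obtain ⟨z, hzB, -, hzt⟩ := ht.exists_le_mem hc hBS hB hcard
  obtain rfl : z = t' := hB.eq hzB ht'B (hzt.trans hle)
  exact hne (le_antisymm hle hzt)

lemma IsChainColoring.exists_isColorTop (hc : IsChainColoring S k c)
    (hwide : ∃ B ⊆ S, IsAntichain (· ≤ ·) (B : Set V) ∧ #B = k) {i : ℕ} (hi : i < k) :
    ∃ t, IsColorTop S k c t ∧ c t = i := by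
  classical
  obtain ⟨B, hBS, hB, hcard⟩ := hwide
  set T := {y ∈ S | InWideAntichain S k y ∧ c y = i}
  have hT : T.Nonempty := by
    obtain ⟨z, hzB, hz⟩ := hc.exists_mem_color hBS hB hcard hi
    exact ⟨z, mem_filter.2 ⟨hBS hzB, ⟨B, hBS, hB, hcard, hzB⟩, hz⟩⟩
  obtain ⟨t, htT, htmax⟩ := T.exists_maximal hT
  obtain ⟨htS, htwide, hti⟩ := mem_filter.1 htT
  refine ⟨t, ⟨htwide, fun y hy hyt => ?_⟩, hti⟩
  have hyT : y ∈ T := mem_filter.2 ⟨hy.mem, hy, hyt.trans hti⟩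
  exact (hc.2 y hy.mem t htS hyt).elim id (htmax hyT)

lemma exists_isColorTop_le [DecidableEq V] {a : V} (hw : WidthLE S k) (ha : Maximal (· ∈ S) a)
    (hc : IsChainColoring (S.erase a) k c)
    (hwide : ∃ B ⊆ S.erase a, IsAntichain (· ≤ ·) (B : Set V) ∧ #B = k) :
    ∃ t, IsColorTop (S.erase a) k c t ∧ t ≤ a := by
  classical
  -- Otherwise the tops of the `k` colors form a `k`-antichain that `a` extends.
  by_contra! hnot
  set X := {t ∈ S.erase a | IsColorTop (S.erase a) k c t}
  have hXcard : k ≤ #X := by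
    refine card_range k ▸ card_le_card_of_surjOn c fun i hi => ?_
    obtain ⟨t, ht, rfl⟩ := hc.exists_isColorTop hwide (mem_range.1 hi)
    exact ⟨t, mem_filter.2 ⟨ht.1.mem, ht⟩, rfl⟩
  have haX : a ∉ X := fun h => notMem_erase a S (mem_filter.1 h).1
  have hXS : X ⊆ S := (filter_subset _ _).trans (erase_subset a S)
  have hanti : IsAntichain (· ≤ ·) ((insert a X : Finset V) : Set V) := by
    rw [coe_insert]
    refine (hc.isAntichain_setOf_isColorTop.subset fun t ht => (mem_filter.1 ht).2).insert
      (fun t ht _ hta => hnot t (mem_filter.1 ht).2 hta)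
      (fun t ht _ hat => hnot t (mem_filter.1 ht).2 (ha.2 (hXS ht) hat))
  have := hw _ (insert_subset ha.1 hXS) hanti
  rw [card_insert_of_notMem haX] at this
  omega

lemma exists_chain_sdiff_widthLE_pred [DecidableEq V] {a : V} (hw : WidthLE S k)
    (ha : Maximal (· ∈ S) a) (hc : IsChainColoring (S.erase a) k c) :
    ∃ K ⊆ S, a ∈ K ∧ IsChain (· ≤ ·) (K : Set V) ∧ WidthLE (S \ K) (k - 1) := by
  classical
  by_cases hnarrow : WidthLE (S.erase a) (k - 1)
  · refine ⟨{a}, singleton_subset_iff.2 ha.1, mem_singleton_self a, ?_, ?_⟩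
    · simp
    · rwa [sdiff_singleton_eq_erase]
  have hwide : ∃ B ⊆ S.erase a, IsAntichain (· ≤ ·) (B : Set V) ∧ #B = k := by
    simp only [WidthLE, not_forall, not_le] at hnarrow
    obtain ⟨B, hBS, hB, hcard⟩ := hnarrow
    exact ⟨B, hBS, hB, le_antisymm (hw B (hBS.trans (erase_subset a S)) hB) (by omega)⟩
  -- Galvin's chain: `a` together with the part of the color class of `t` below `t`; every
  -- `k`-antichain of `S.erase a` meets it, since `t` is the top of its color class.
  obtain ⟨t, ht, hta⟩ := exists_isColorTop_le hw ha hc hwide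
  refine ⟨insert a {z ∈ S.erase a | c z = c t ∧ z ≤ t},
    insert_subset ha.1 ((filter_subset _ _).trans (erase_subset a S)), mem_insert_self _ _, ?_, ?_⟩
  · rw [coe_insert]
    refine IsChain.insert (fun x hx y hy _ => ?_) fun z hz _ =>
      Or.inr ((mem_filter.1 hz).2.2.trans hta)
    obtain ⟨hxS, hxt, -⟩ := mem_filter.1 hx
    obtain ⟨hyS, hyt, -⟩ := mem_filter.1 hy
    exact hc.2 x hxS y hyS (hxt.trans hyt.symm)
  · intro A hAK hA
    by_contra! hlarge
    have hAS : A ⊆ S.erase a := fun x hx => by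
      obtain ⟨hxS, hxK⟩ := mem_sdiff.1 (hAK hx)
      exact mem_erase.2 ⟨fun h => hxK (h ▸ mem_insert_self _ _), hxS⟩
    have hcard : #A = k := le_antisymm (hw A (hAK.trans sdiff_subset) hA) (by omega)
    obtain ⟨z, hzA, hz, hzt⟩ := ht.exists_le_mem hc hAS hA hcard
    exact (mem_sdiff.1 (hAK hzA)).2 (mem_insert_of_mem (mem_filter.2 ⟨hAS hzA, hz, hzt⟩))

theorem exists_isChainColoring_of_widthLE (S : Finset V) (k : ℕ) (hw : WidthLE S k) :
    ∃ c, IsChainColoring S k c := by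
  classical
  induction S using Finset.strongInduction generalizing k with
  | H S ih =>
  rcases S.eq_empty_or_nonempty with rfl | hS
  · exact ⟨0, by simp [IsChainColoring]⟩
  obtain ⟨a, ha⟩ := S.exists_maximal hS
  obtain ⟨c, hc⟩ := ih _ (erase_ssubset ha.1) k (hw.mono (erase_subset a S))
  obtain ⟨K, hKS, haK, hK, hwK⟩ := exists_chain_sdiff_widthLE_pred hw ha hc
  obtain ⟨c', hc'⟩ := ih _ (sdiff_ssubset hKS ⟨a, haK⟩) (k - 1) hwK
  rw [← Nat.sub_add_cancel (hw.one_le ha.1)]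
  exact ⟨_, hc'.extend_by_chain hK⟩

theorem IsChainColoring.ncard_antichains_le [Fintype V]
    (hc : IsChainColoring univ k c) :
    {A : Finset V | IsAntichain (· ≤ ·) (A : Set V)}.ncard ≤
      ∏ i ∈ range k, (#{x | c x = i} + 1) := by
  classical
  calc _ ≤ #((range k).pi fun i => {B ∈ ({x | c x = i} : Finset V).powerset | #B ≤ 1}) := by
        rw [← Set.ncard_coe_finset]
        refine Set.ncard_le_ncard_of_injOn (fun A i _ => {x ∈ A | c x = i}) ?_ ?_
        · intro A hA
          rw [mem_coe, mem_pi]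
          intro i _
          rw [mem_filter, mem_powerset]
          refine ⟨filter_subset_filter _ (subset_univ A), card_le_one.2 fun x hx y hy => ?_⟩
          obtain ⟨hxA, hxi⟩ := mem_filter.1 hx
          obtain ⟨hyA, hyi⟩ := mem_filter.1 hy
          exact hc.injOn (subset_univ A) hA hxA hyA (hxi.trans hyi.symm)
        · intro A _ B _ hAB
          ext x
          simpa using congrArg (x ∈ ·) (congrFun₂ hAB (c x) (mem_range.2 (hc.1 x (mem_univ x))))
    _ = _ := by
        rw [card_pi]
        exact prod_congr rfl fun i _ => card_powerset_filter_card_le_one _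

end Dilworth

theorem antichain_count_of_large_vertexCover_general
    {V : Type*} [PartialOrder V] [Fintype V]
    (α : ℝ)
    (hint : ∃ k : ℕ, 0 < k ∧ (k : ℝ) = α * (Fintype.card V : ℝ))
    (hvc : ∀ C : Finset V,
      (∀ u v : V, u ≠ v → (u < v ∨ v < u) → u ∈ C ∨ v ∈ C) →
      (1 - α) * (Fintype.card V : ℝ) ≤ (C.card : ℝ)) :
    ({A : Finset V | IsAntichain (· ≤ ·) (A : Set V)}.ncard : ℝ) ≤
      (1 + 1 / α) ^ (α * (Fintype.card V : ℝ)) := by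
  classical
  obtain ⟨k, hk0, hk⟩ := hint
  set n := Fintype.card V
  obtain ⟨hα, hn⟩ : α ≠ 0 ∧ (n : ℝ) ≠ 0 := mul_ne_zero_iff.1 (hk ▸ Nat.cast_ne_zero.2 hk0.ne')
  have hw : WidthLE (univ : Finset V) k := fun A _ hA => by
    have hcover := hvc Aᶜ fun u v _ huv =>
      huv.elim hA.mem_compl_or_mem_compl fun h => (hA.mem_compl_or_mem_compl h).symm
    rw [card_compl, Nat.cast_sub (card_le_univ A)] at hcover
    exact_mod_cast (by linarith : (#A : ℝ) ≤ k)
  obtain ⟨c, hc⟩ := exists_isChainColoring_of_widthLE univ k hw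
  have hsum : ∑ i ∈ range k, ((#{x | c x = i} : ℝ) + 1) = n + k := by
    rw [sum_add_distrib, ← Nat.cast_sum,
      ← card_eq_sum_card_fiberwise fun x _ => mem_range.2 (hc.1 x (mem_univ x))]
    simp [n]
  have hbase : ((n : ℝ) + k) / k = 1 + 1 / α := by
    rw [hk]; field_simp; ring
  calc _ ≤ ∏ i ∈ range k, ((#{x | c x = i} : ℝ) + 1) := by exact_mod_cast hc.ncard_antichains_le
    _ ≤ (((n : ℝ) + k) / k) ^ k := by
        simpa [hsum] using prod_le_sum_div_card_pow (range k)
          (fun i => (#{x | c x = i} : ℝ) + 1) fun i _ => by positivity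
    _ = _ := by rw [hbase, ← hk, rpow_natCast]

/-- If every vertex cover of the comparability graph of an `n`-element poset
has size at least `(1-α)n` (with `α ∈ (0,1)` and `αn` a positive integer),
then the number of antichains is at most `(1+1/α)^{αn}`. -/
theorem antichain_count_of_large_vertexCover
    {V : Type*} [PartialOrder V] [Fintype V] [DecidableEq V]
    (α : ℝ) (hα0 : 0 < α) (hα1 : α < 1)
    (hint : ∃ k : ℕ, 0 < k ∧ (k : ℝ) = α * (Fintype.card V : ℝ))
    (hvc : ∀ C : Finset V,
      (∀ u v : V, u ≠ v → (u < v ∨ v < u) → u ∈ C ∨ v ∈ C) →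
      (1 - α) * (Fintype.card V : ℝ) ≤ (C.card : ℝ)) :
    ({A : Finset V | IsAntichain (· ≤ ·) (A : Set V)}.ncard : ℝ) ≤
      (1 + 1 / α) ^ (α * (Fintype.card V : ℝ)) :=
  antichain_count_of_large_vertexCover_general α hint hvc
end

section
/- Let G be a transitively closed DAG, m, t ≥ 1 integers, and X ⊆ V downward closed. Then X admits a feasible m-machine schedule with makespan at most t if and only if there exists a subset Y ⊆ X such that Y is an antichain, |Y| ≤ m, X \ Y is downward closed, and X \ Y admits a feasible m-machine schedule with makespan at most t − 1. -/
/-- A feasible schedule for a precedence relation `r` on job set `X` with `m`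
machines and makespan `T`. -/
def IsSchedule {V : Type*} [DecidableEq V] (r : V → V → Prop)
    (X : Finset V) (m T : ℕ) (S : Fin T → Finset V) : Prop :=
  (∀ t, S t ⊆ X) ∧ (∀ v ∈ X, ∃! t, v ∈ S t) ∧ (∀ t, (S t).card ≤ m) ∧
  ∀ u v, r u v → ∀ t t', u ∈ S t → v ∈ S t' → t < t'

/-- DP recurrence: a downward closed `X` is schedulable in `t` slots iff some
antichain `Y ⊆ X` of size `≤ m` can be removed leaving a downward closed set
schedulable in `t - 1` slots. -/
theorem schedule_iff_remove_antichain
    {V : Type*} [DecidableEq V] (r : V → V → Prop)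
    (htrans : Transitive r) (hirr : Irreflexive r)
    (m t : ℕ) (hm : 1 ≤ m) (ht : 1 ≤ t)
    (X : Finset V) (hX : ∀ v ∈ X, ∀ u, r u v → u ∈ X) :
    (∃ S : Fin t → Finset V, IsSchedule r X m t S) ↔
      ∃ Y ⊆ X, IsAntichain r (Y : Set V) ∧ Y.card ≤ m ∧
        (∀ v ∈ X \ Y, ∀ u, r u v → u ∈ X \ Y) ∧
        ∃ S' : Fin (t - 1) → Finset V, IsSchedule r (X \ Y) m (t - 1) S' := by
  obtain ⟨k, rfl⟩ : ∃ k, t = k + 1 := ⟨t - 1, (Nat.succ_pred_eq_of_pos ht).symm⟩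

  constructor
  · rintro ⟨S, hsub, huniq, hcard, hprec⟩
    set Y := S (Fin.last k) with hY
    refine ⟨Y, hsub _, ?_, hcard _, ?_, ?_⟩
    · intro a ha b hb hab hr
      exact absurd (hprec a b hr _ _ ha hb) (lt_irrefl _)
    · intro v hv u hru
      rw [Finset.mem_sdiff] at hv ⊢
      obtain ⟨hvX, hvY⟩ := hv
      have huX : u ∈ X := hX v hvX u hru
      refine ⟨huX, fun huY => ?_⟩
      obtain ⟨tv, hvt, -⟩ := huniq v hvX
      have h1 : Fin.last k < tv := hprec u v hru _ _ huY hvt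
      exact absurd h1 (not_lt.2 (Fin.le_last _))
    · refine ⟨fun i => S i.castSucc, ?_, ?_, fun i => hcard _, ?_⟩
      · intro i v hv
        rw [Finset.mem_sdiff]
        have hvX := hsub _ hv
        refine ⟨hvX, fun hvY => ?_⟩
        obtain ⟨tv, -, hu⟩ := huniq v hvX
        have h1 := hu _ hv
        have h2 := hu _ hvY
        exact absurd (h1.trans h2.symm) (Fin.castSucc_lt_last i).ne
      · intro v hv
        rw [Finset.mem_sdiff] at hv
        obtain ⟨hvX, hvY⟩ := hv
        obtain ⟨tv, hvt, hu⟩ := huniq v hvX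
        have htv : tv ≠ Fin.last k := fun h => hvY (by rw [hY, ← h]; exact hvt)
        obtain ⟨i, rfl⟩ := Fin.exists_castSucc_eq.2 htv
        refine ⟨i, hvt, fun j hj => ?_⟩
        exact Fin.castSucc_injective k (hu _ hj)
      · intro u v hr a b ha hb
        exact (Fin.castSucc_lt_castSucc_iff).1 (hprec u v hr _ _ ha hb)
  · rintro ⟨Y, hYX, hanti, hYcard, hdc, S', hsub, huniq, hcard, hprec⟩
    refine ⟨Fin.lastCases Y S', ?_, ?_, ?_, ?_⟩
    · intro i
      induction i using Fin.lastCases with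
      | last => simpa using hYX
      | cast i =>
        simp only [Fin.lastCases_castSucc]
        exact (hsub i).trans (Finset.sdiff_subset)
    · intro v hv
      by_cases hvY : v ∈ Y
      · refine ⟨Fin.last k, by simpa using hvY, fun j hj => ?_⟩
        induction j using Fin.lastCases with
        | last => rfl
        | cast j =>
          simp only [Fin.lastCases_castSucc] at hj
          exact absurd hvY (Finset.mem_sdiff.1 (hsub j hj)).2
      · have hv' : v ∈ X \ Y := Finset.mem_sdiff.2 ⟨hv, hvY⟩
        obtain ⟨i, hvi, hu⟩ := huniq v hv'
        refine ⟨i.castSucc, by simpa using hvi, fun j hj => ?_⟩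
        induction j using Fin.lastCases with
        | last => exact absurd (by simpa using hj) hvY
        | cast j =>
          simp only [Fin.lastCases_castSucc] at hj
          exact congrArg Fin.castSucc (hu _ hj)
    · intro i
      induction i using Fin.lastCases with
      | last => simpa using hYcard
      | cast i => simpa using hcard i
    · intro u v hr a b ha hb
      induction a using Fin.lastCases with
      | last =>
        induction b using Fin.lastCases with
        | last =>
          simp only [Fin.lastCases_last] at ha hb
          have hne : u ≠ v := fun h => hirr v (h ▸ hr)
          exact absurd hr (hanti ha hb hne)
        | cast b =>
          simp only [Fin.lastCases_last, Fin.lastCases_castSucc] at ha hb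
          have := (Finset.mem_sdiff.1 (hdc v (hsub b hb) u hr)).2
          exact absurd ha this
      | cast a =>
        induction b using Fin.lastCases with
        | last => exact Fin.castSucc_lt_last a
        | cast b =>
          simp only [Fin.lastCases_castSucc] at ha hb
          exact Fin.castSucc_lt_castSucc_iff.2 (hprec u v hr _ _ ha hb)
end

section
/- Let G be a transitively closed DAG, B an antichain of G, m, t ≥ 1. Then pred[B] admits a feasible m-machine schedule with makespan at most t if and only if there exists X ⊆ B with |X| ≤ m such that pred[B] \ X is downward closed and admits a feasible m-machine schedule with makespan at most t − 1; moreover in that case pred[B] \ X = pred[sinks(pred[B] \ X)]. -/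
lemma exists_maximal_above {V : Type*} [DecidableEq V] (r : V → V → Prop)
    (htrans : Transitive r) (hirr : Irreflexive r) :
    ∀ (T : Finset V), ∀ v ∈ T, ∃ s ∈ T, (s = v ∨ r v s) ∧ ∀ w ∈ T, ¬ r s w := by
  intro T
  induction T using Finset.strongInduction with
  | _ T ih =>
    intro v hv
    by_cases hmax : ∀ w ∈ T, ¬ r v w
    · exact ⟨v, hv, Or.inl rfl, hmax⟩
    · push_neg at hmax
      obtain ⟨w, hwT, hrvw⟩ := hmax
      have hwne : w ≠ v := fun h => hirr v (h ▸ hrvw)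
      have hsub : T.erase v ⊂ T := Finset.erase_ssubset hv
      obtain ⟨s, hsT, hs, hsmax⟩ := ih (T.erase v) hsub w (Finset.mem_erase.mpr ⟨hwne, hwT⟩)
      refine ⟨s, (Finset.erase_subset v T) hsT, Or.inr ?_, ?_⟩
      · rcases hs with rfl | h
        · exact hrvw
        · exact htrans hrvw h
      · intro u huT hrsu
        by_cases huv : u = v
        · subst huv
          have hrsw : r s w := htrans hrsu hrvw
          rcases hs with rfl | h
          · exact hirr s hrsw
          · exact hirr s (htrans hrsw h)
        · exact hsmax u (Finset.mem_erase.mpr ⟨huv, huT⟩) hrsu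

/-- Correctness of the antichain-indexed DP: `pred[B]` is schedulable in `t`
slots iff some `X ⊆ B` with `|X| ≤ m` can be removed leaving a downward closed
set schedulable in `t-1` slots; moreover any such remaining set equals the
downward closure of its sinks. -/
theorem predClosure_schedule_iff
    {V : Type*} [DecidableEq V] (r : V → V → Prop)
    (htrans : Transitive r) (hirr : Irreflexive r)
    (m t : ℕ) (hm : 1 ≤ m) (ht : 1 ≤ t)
    (B : Finset V) (hB : IsAntichain r (B : Set V))
    (PB : Finset V) (hPB : ∀ v, v ∈ PB ↔ v ∈ B ∨ ∃ b ∈ B, r v b) :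
    ((∃ S : Fin t → Finset V, IsSchedule r PB m t S) ↔
      ∃ X ⊆ B, X.card ≤ m ∧
        (∀ v ∈ PB \ X, ∀ u, r u v → u ∈ PB \ X) ∧
        ∃ S' : Fin (t - 1) → Finset V, IsSchedule r (PB \ X) m (t - 1) S') ∧
    ∀ X ⊆ B, (∀ v ∈ PB \ X, ∀ u, r u v → u ∈ PB \ X) →
      ((PB \ X : Finset V) : Set V) =
        ({v | v ∈ PB \ X ∧ ∀ w ∈ PB \ X, ¬ r v w} ∪
          {u | ∃ s, (s ∈ PB \ X ∧ ∀ w ∈ PB \ X, ¬ r s w) ∧ r u s}) := by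
  have hBsub : B ⊆ PB := fun b hb => (hPB b).mpr (Or.inl hb)
  constructor
  · constructor
    · rintro ⟨S, hSsub, hSuniq, hScard, hSprec⟩
      have hlt : t - 1 < t := by omega
      set last : Fin t := ⟨t - 1, hlt⟩ with hlastdef
      -- elements of the last slot have no successors in PB
      have hlastmax : ∀ u ∈ S last, ∀ w ∈ PB, ¬ r u w := by
        intro u hu w hw hruw
        obtain ⟨tw, htw, _⟩ := hSuniq w hw
        have h1 : last < tw := hSprec u w hruw last tw hu htw
        have h2 : t - 1 < (tw : ℕ) := h1
        have := tw.2
        omega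
      refine ⟨S last, ?_, hScard last, ?_, ?_⟩
      · intro u hu
        have huPB : u ∈ PB := hSsub last hu
        rcases (hPB u).mp huPB with h | ⟨b, hb, hrub⟩
        · exact h
        · exact absurd hrub (hlastmax u hu b (hBsub hb))
      · intro v hv u hruv
        rw [Finset.mem_sdiff] at hv ⊢
        obtain ⟨hvPB, hvX⟩ := hv
        have huPB : u ∈ PB := by
          rcases (hPB v).mp hvPB with h | ⟨b, hb, hrvb⟩
          · exact (hPB u).mpr (Or.inr ⟨v, h, hruv⟩)
          · exact (hPB u).mpr (Or.inr ⟨b, hb, htrans hruv hrvb⟩)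
        exact ⟨huPB, fun huX => hlastmax u huX v hvPB hruv⟩
      · refine ⟨fun i => S ⟨i.1, by omega⟩ \ S last, ?_, ?_, ?_, ?_⟩
        · intro i a ha
          dsimp only at ha
          rw [Finset.mem_sdiff] at ha ⊢
          exact ⟨hSsub _ ha.1, ha.2⟩
        · intro v hv
          rw [Finset.mem_sdiff] at hv
          obtain ⟨hvPB, hvX⟩ := hv
          obtain ⟨tv, htv, huni⟩ := hSuniq v hvPB
          have htvne : tv ≠ last := fun h => hvX (h ▸ htv)
          have htvlt : (tv : ℕ) < t - 1 := by
            have h2 := tv.2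
            rcases Nat.lt_or_ge (tv : ℕ) (t - 1) with h | h
            · exact h
            · exact absurd (Fin.ext (show (tv:ℕ) = t - 1 by omega)) htvne
          refine ⟨⟨tv, htvlt⟩, ?_, ?_⟩
          · dsimp only
            rw [Finset.mem_sdiff, Fin.eta]
            exact ⟨htv, hvX⟩
          · intro j hj
            dsimp only at hj
            rw [Finset.mem_sdiff] at hj
            have := huni ⟨j.1, by omega⟩ hj.1
            exact Fin.ext (by simpa using congrArg Fin.val this)
        · intro i
          exact le_trans (Finset.card_le_card Finset.sdiff_subset) (hScard _)
        · intro u v hruv i j hi hj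
          dsimp only at hi hj
          rw [Finset.mem_sdiff] at hi hj
          have h := hSprec u v hruv ⟨i.1, by omega⟩ ⟨j.1, by omega⟩ hi.1 hj.1
          exact h
    · rintro ⟨X, hXB, hXm, hclosed, S', hS'sub, hS'uniq, hS'card, hS'prec⟩
      refine ⟨fun i => if h : (i : ℕ) < t - 1 then S' ⟨i, h⟩ else X, ?_, ?_, ?_, ?_⟩
      · intro i a ha
        dsimp only at ha
        by_cases h : (i : ℕ) < t - 1
        · rw [dif_pos h] at ha
          exact (Finset.mem_sdiff.mp (hS'sub _ ha)).1
        · rw [dif_neg h] at ha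
          exact hBsub (hXB ha)
      · intro v hv
        by_cases hvX : v ∈ X
        · refine ⟨⟨t - 1, by omega⟩, ?_, ?_⟩
          · dsimp only
            rw [dif_neg (show ¬ t - 1 < t - 1 from lt_irrefl _)]
            exact hvX
          · intro j hj
            dsimp only at hj
            by_cases h : (j : ℕ) < t - 1
            · rw [dif_pos h] at hj
              exact absurd hvX (Finset.mem_sdiff.mp (hS'sub _ hj)).2
            · exact Fin.ext (show (j:ℕ) = t - 1 by have := j.2; omega)
        · have hvS : v ∈ PB \ X := Finset.mem_sdiff.mpr ⟨hv, hvX⟩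
          obtain ⟨tv, htv, huni⟩ := hS'uniq v hvS
          have htvt : (tv : ℕ) < t := by have := tv.2; omega
          refine ⟨⟨tv, htvt⟩, ?_, ?_⟩
          · dsimp only
            rw [dif_pos tv.2, Fin.eta]
            exact htv
          · intro j hj
            dsimp only at hj
            by_cases h : (j : ℕ) < t - 1
            · rw [dif_pos h] at hj
              have := huni ⟨j, h⟩ hj
              exact Fin.ext (by simpa using congrArg Fin.val this)
            · rw [dif_neg h] at hj
              exact absurd hj hvX
      · intro i
        dsimp only
        by_cases h : (i : ℕ) < t - 1
        · rw [dif_pos h]; exact hS'card _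
        · rw [dif_neg h]; exact hXm
      · intro u v hruv i j hi hj
        dsimp only at hi hj
        by_cases hio : (i : ℕ) < t - 1
        · rw [dif_pos hio] at hi
          by_cases hjo : (j : ℕ) < t - 1
          · rw [dif_pos hjo] at hj
            exact hS'prec u v hruv ⟨i, hio⟩ ⟨j, hjo⟩ hi hj
          · have : (j : ℕ) = t - 1 := by have := j.2; omega
            exact Fin.lt_def.mpr (by omega)
        · rw [dif_neg hio] at hi
          by_cases hjo : (j : ℕ) < t - 1
          · rw [dif_pos hjo] at hj
            have hv := hS'sub _ hj
            have hu := hclosed v hv u hruv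
            exact absurd hi (Finset.mem_sdiff.mp hu).2
          · rw [dif_neg hjo] at hj
            have hne : u ≠ v := fun h => hirr v (h ▸ hruv)
            exact absurd hruv (hB (hXB hi) (hXB hj) hne)
  · intro X hXB hclosed
    ext v
    simp only [Set.mem_union, Set.mem_setOf_eq, Finset.mem_coe]
    constructor
    · intro hv
      obtain ⟨s, hsT, hs, hsmax⟩ := exists_maximal_above r htrans hirr (PB \ X) v hv
      rcases hs with rfl | hrvs
      · exact Or.inl ⟨hv, hsmax⟩
      · exact Or.inr ⟨s, ⟨hsT, hsmax⟩, hrvs⟩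
    · rintro (⟨hv, _⟩ | ⟨s, ⟨hs, _⟩, hrvs⟩)
      · exact hv
      · exact hclosed s hs v hrvs
end

section
/- For every instance of unit-length precedence-constrained scheduling on m identical machines, there exists an optimal (minimum-makespan) schedule σ = (S_1,…,S_T) satisfying: (i) for every time slot t with 0 < |H_t| < m (where H_t is the set of non-sink jobs in S_t), every job scheduled after t is either a successor of some job in S_t or is a sink of V(σ); and (ii) every time slot consisting only of sinks occurs after all non-sink jobs have been scheduled. -/
/-!
Among the schedules of minimum makespan take one minimizing the sum of the slots of the non-sink
jobs. Suppose some slot `t` holds fewer than `m` non-sinks while a later non-sink job has no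
predecessor in slot `t`. An `r`-minimal such job `v` has all its predecessors before slot `t`, so it
can be moved into slot `t`, trading places with a sink of slot `t` if that slot is full. This keeps
the schedule feasible and lowers the sum, a contradiction. Property (i) is this statement, and (ii)
is its special case of a slot of sinks, none of which precedes anything.
-/

theorem Finset.exists_minimal_of_isStrictOrder {V : Type*} {r : V → V → Prop} [IsStrictOrder V r]
    {X : Finset V} (hX : X.Nonempty) : ∃ a ∈ X, ∀ b ∈ X, ¬ r b a := by
  obtain ⟨⟨a, ha⟩, -, hmin⟩ :=
    (X.wellFoundedOn (r := r)).has_min Set.univ ⟨⟨_, hX.choose_spec⟩, trivial⟩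
  exact ⟨a, ha, fun b hb => hmin ⟨b, hb⟩ trivial⟩

section SlotAssignment

variable {V : Type*} {r : V → V → Prop} {X : Finset V} {m T : ℕ} {σ : V → ℕ}

def sinks (r : V → V → Prop) [DecidableRel r] (X : Finset V) : Finset V :=
  X.filter fun v => ∀ w ∈ X, ¬ r v w

/-- A schedule encoded by the slot `σ v` of each job `v`; slot `t` is `X.filter (σ · = t)`. -/
structure IsSlotAssignment (r : V → V → Prop) (X : Finset V) (m T : ℕ) (σ : V → ℕ) : Prop where
  lt_of_mem : ∀ v ∈ X, σ v < T
  card_le : ∀ t, (X.filter (σ · = t)).card ≤ m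
  lt_of_rel : ∀ u ∈ X, ∀ v ∈ X, r u v → σ u < σ v

theorem IsSlotAssignment.isSchedule [DecidableEq V] (h : IsSlotAssignment r X m T σ) :
    IsSchedule r X m T fun t => X.filter (σ · = t) := by
  refine ⟨fun t => Finset.filter_subset _ _, fun v hv => ⟨⟨σ v, h.lt_of_mem v hv⟩, ?_, ?_⟩,
    fun t => h.card_le t, ?_⟩
  · simp [hv]
  · intro t ht
    exact Fin.ext (Finset.mem_filter.mp ht).2.symm
  · intro u v huv t t' hu hv
    rw [Finset.mem_filter] at hu hv
    rw [Fin.lt_def, ← hu.2, ← hv.2]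
    exact h.lt_of_rel u hu.1 v hv.1 huv

theorem IsSchedule.exists_isSlotAssignment [DecidableEq V] {S : Fin T → Finset V}
    (h : IsSchedule r X m T S) : ∃ σ, IsSlotAssignment r X m T σ := by
  obtain ⟨-, huniq, hcard, hprec⟩ := h
  choose slot hslot using fun v (hv : v ∈ X) => (huniq v hv).exists
  let σ : V → ℕ := fun v => if hv : v ∈ X then slot v hv else 0
  have hσ : ∀ v (hv : v ∈ X), σ v = slot v hv := fun v hv => dif_pos hv
  refine ⟨σ, fun v hv => hσ v hv ▸ (slot v hv).isLt, fun t => ?_, fun u hu v hv huv => ?_⟩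
  · by_cases ht : t < T
    · refine le_trans (Finset.card_le_card fun v hv => ?_) (hcard ⟨t, ht⟩)
      obtain ⟨hvX, hvt⟩ := Finset.mem_filter.mp hv
      have : slot v hvX = ⟨t, ht⟩ := Fin.ext ((hσ v hvX).symm.trans hvt)
      exact this ▸ hslot v hvX
    · rw [Finset.filter_false_of_mem fun v hv (hvt : σ v = t) =>
        ht (hvt ▸ hσ v hv ▸ (slot v hv).isLt)]
      exact Nat.zero_le m
  · rw [hσ u hu, hσ v hv]
    exact hprec u v huv _ _ (hslot u hu) (hslot v hv)

theorem exists_isSlotAssignment [IsStrictOrder V r] (hm : 1 ≤ m) (X : Finset V) :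
    ∃ T σ, IsSlotAssignment r X m T σ := by
  classical
  induction X using Finset.strongInduction with
  | _ X ih =>
  rcases X.eq_empty_or_nonempty with rfl | hX
  · exact ⟨0, 0, by simp, by simp, by simp⟩
  -- a job without successors goes into a new last slot
  obtain ⟨a, haX, ha⟩ := Finset.exists_minimal_of_isStrictOrder (r := Function.swap r) hX
  obtain ⟨T, σ, hσ⟩ := ih _ (Finset.erase_ssubset haX)
  have hrest : ∀ v ∈ X, v ≠ a → Function.update σ a T v = σ v ∧ v ∈ X.erase a :=
    fun v hv hva => ⟨Function.update_of_ne hva _ _, Finset.mem_erase.mpr ⟨hva, hv⟩⟩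
  refine ⟨T + 1, Function.update σ a T, ⟨fun v hv => ?_, fun t => ?_, fun u hu v hv huv => ?_⟩⟩
  · by_cases hva : v = a
    · simp [hva]
    · rw [(hrest v hv hva).1]
      exact (hσ.lt_of_mem v (hrest v hv hva).2).trans (Nat.lt_succ_self T)
  · by_cases ht : t = T
    · subst ht
      refine (Finset.card_le_card (t := {a}) fun x hx => ?_).trans (by simpa using hm)
      obtain ⟨hxX, hxt⟩ := Finset.mem_filter.mp hx
      by_contra hxa
      rw [Finset.mem_singleton] at hxa
      rw [(hrest x hxX hxa).1] at hxt
      exact (hσ.lt_of_mem x (hrest x hxX hxa).2).ne hxt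
    · refine le_trans (Finset.card_le_card fun v hv => ?_) (hσ.card_le t)
      obtain ⟨hvX, hvt⟩ := Finset.mem_filter.mp hv
      have hva : v ≠ a := by
        rintro rfl
        exact ht (by simpa using hvt.symm)
      rw [(hrest v hvX hva).1] at hvt
      exact Finset.mem_filter.mpr ⟨(hrest v hvX hva).2, hvt⟩
  · have hua : u ≠ a := by
      rintro rfl
      exact ha v hv huv
    rw [(hrest u hu hua).1]
    by_cases hva : v = a
    · subst hva
      simpa using hσ.lt_of_mem u (hrest u hu hua).2
    · rw [(hrest v hv hva).1]
      exact hσ.lt_of_rel u (hrest u hu hua).2 v (hrest v hv hva).2 huv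

variable [DecidableEq V]

theorem IsSlotAssignment.update_of_card_lt (h : IsSlotAssignment r X m T σ) {v : V} {t : ℕ}
    (htv : t < σ v) (hcard : (X.filter (σ · = t)).card < m)
    (hpred : ∀ u ∈ X, r u v → σ u < t) :
    IsSlotAssignment r X m T (Function.update σ v t) := by
  have hle : Function.update σ v t ≤ σ := update_le_iff.2 ⟨htv.le, fun _ _ => le_rfl⟩
  refine ⟨fun x hx => (hle x).trans_lt (h.lt_of_mem x hx), fun s => ?_, fun u hu w hw huw => ?_⟩
  · have hsub : X.filter (Function.update σ v t · = s) ⊆ insert v (X.filter (σ · = s)) := by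
      intro x hx
      obtain ⟨hxX, hxs⟩ := Finset.mem_filter.mp hx
      by_cases hxv : x = v
      · exact hxv ▸ Finset.mem_insert_self _ _
      · rw [Function.update_of_ne hxv] at hxs
        exact Finset.mem_insert_of_mem (Finset.mem_filter.mpr ⟨hxX, hxs⟩)
    by_cases hst : s = t
    · subst hst
      exact (Finset.card_le_card hsub).trans ((Finset.card_insert_le _ _).trans hcard)
    · refine le_trans (Finset.card_le_card fun x hx => ?_) (h.card_le s)
      have hxv : x ≠ v := by
        rintro rfl
        exact hst (by simpa using (Finset.mem_filter.mp hx).2.symm)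
      exact (Finset.mem_insert.mp (hsub hx)).resolve_left hxv
  · by_cases hwv : w = v
    · subst hwv
      have huw' : u ≠ w := fun h' => (hpred u hu huw).not_gt (h' ▸ htv)
      simpa [huw'] using hpred u hu huw
    · exact (hle u).trans_lt
        ((h.lt_of_rel u hu w hw huw).trans_eq (Function.update_of_ne hwv _ _).symm)

theorem IsSlotAssignment.comp_swap (h : IsSlotAssignment r X m T σ) {v w : V} (hv : v ∈ X)
    (hw : w ∈ X) (hwv : σ w < σ v) (hw_sink : ∀ z ∈ X, ¬ r w z)
    (hpred : ∀ u ∈ X, r u v → σ u < σ w) :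
    IsSlotAssignment r X m T (σ ∘ Equiv.swap v w) := by
  have hmem : ∀ x, Equiv.swap v w x ∈ X ↔ x ∈ X := by
    intro x
    rcases eq_or_ne x v with rfl | hxv
    · simp [hv, hw]
    rcases eq_or_ne x w with rfl | hxw
    · simp [hv, hw]
    · rw [Equiv.swap_apply_of_ne_of_ne hxv hxw]
  have hle : ∀ u, u ≠ w → σ (Equiv.swap v w u) ≤ σ u := by
    intro u huw
    rcases eq_or_ne u v with rfl | huv
    · simpa using hwv.le
    · rw [Equiv.swap_apply_of_ne_of_ne huv huw]
  have hge : ∀ b, b ≠ v → σ b ≤ σ (Equiv.swap v w b) := by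
    intro b hbv
    rcases eq_or_ne b w with rfl | hbw
    · simpa using hwv.le
    · rw [Equiv.swap_apply_of_ne_of_ne hbv hbw]
  refine ⟨fun x hx => h.lt_of_mem _ ((hmem x).mpr hx), fun s => ?_, fun u hu b hb hub => ?_⟩
  · rw [Finset.card_equiv (t := X.filter (σ · = s)) (Equiv.swap v w) fun x => by simp [hmem]]
    exact h.card_le s
  have huw : u ≠ w := fun h' => hw_sink b hb (h' ▸ hub)
  rcases eq_or_ne b v with rfl | hbv
  · have huv : u ≠ b := fun h' => (hpred u hu hub).not_gt (h' ▸ hwv)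
    simpa [Equiv.swap_apply_of_ne_of_ne huv huw] using hpred u hu hub
  · exact (hle u huw).trans_lt ((h.lt_of_rel u hu b hb hub).trans_le (hge b hbv))

theorem sum_update_lt {N : Finset V} {v : V} {t : ℕ} (hv : v ∈ N) (htv : t < σ v) :
    ∑ x ∈ N, Function.update σ v t x < ∑ x ∈ N, σ x :=
  Finset.sum_lt_sum (fun x _ => update_le_iff.2 ⟨htv.le, fun _ _ => le_rfl⟩ x)
    ⟨v, hv, by simpa using htv⟩

theorem sum_comp_swap_lt {N : Finset V} {v w : V} (hv : v ∈ N) (hw : w ∉ N) (hwv : σ w < σ v) :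
    ∑ x ∈ N, σ (Equiv.swap v w x) < ∑ x ∈ N, σ x := by
  refine Finset.sum_lt_sum (fun x hx => ?_) ⟨v, hv, by simpa using hwv⟩
  rcases eq_or_ne x v with rfl | hxv
  · simpa using hwv.le
  · rw [Equiv.swap_apply_of_ne_of_ne hxv (ne_of_mem_of_not_mem hx hw)]

variable [DecidableRel r]

theorem exists_free_nonsink_preds_lt [IsStrictOrder V r] {t : ℕ} {v : V}
    (hv : v ∈ X \ sinks r X) (htv : t < σ v) (hfree : ∀ u ∈ X, σ u = t → ¬ r u v) :
    ∃ v ∈ X \ sinks r X, t < σ v ∧ ∀ u ∈ X, r u v → σ u < t := by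
  set B := (X \ sinks r X).filter fun x => t < σ x ∧ ∀ u ∈ X, σ u = t → ¬ r u x
  obtain ⟨v, hvB, hmin⟩ := Finset.exists_minimal_of_isStrictOrder (r := r) (X := B)
    ⟨v, Finset.mem_filter.mpr ⟨hv, htv, hfree⟩⟩
  obtain ⟨hv, htv, hfree⟩ := Finset.mem_filter.mp hvB
  refine ⟨v, hv, htv, fun u hu huv => ?_⟩
  by_contra! htu
  rcases htu.eq_or_lt with htu | htu
  · exact hfree u hu htu.symm huv
  · have hu_nonsink : u ∉ sinks r X := fun hK =>
      (Finset.mem_filter.mp hK).2 v (Finset.mem_sdiff.mp hv).1 huv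
    refine hmin u (Finset.mem_filter.mpr ⟨Finset.mem_sdiff.mpr ⟨hu, hu_nonsink⟩, htu, ?_⟩) huv
    exact fun u' hu' hu't hu'u => hfree u' hu' hu't (_root_.trans hu'u huv)

theorem IsSlotAssignment.exists_sum_lt [IsStrictOrder V r] (h : IsSlotAssignment r X m T σ)
    {t : ℕ} (hcard : (X.filter (σ · = t) \ sinks r X).card < m) {v : V} (hv : v ∈ X \ sinks r X)
    (htv : t < σ v) (hfree : ∀ u ∈ X, σ u = t → ¬ r u v) :
    ∃ σ', IsSlotAssignment r X m T σ' ∧ ∑ x ∈ X \ sinks r X, σ' x < ∑ x ∈ X \ sinks r X, σ x := by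
  obtain ⟨v, hv, htv, hpred⟩ := exists_free_nonsink_preds_lt hv htv hfree
  by_cases hroom : (X.filter (σ · = t)).card < m
  · exact ⟨_, h.update_of_card_lt htv hroom hpred, sum_update_lt hv htv⟩
  obtain ⟨w, hwt, hw⟩ :=
    Finset.exists_mem_notMem_of_card_lt_card (hcard.trans_le (not_lt.mp hroom))
  have hwK : w ∈ sinks r X := by
    by_contra hwK
    exact hw (Finset.mem_sdiff.mpr ⟨hwt, hwK⟩)
  obtain ⟨hwX, rfl⟩ := Finset.mem_filter.mp hwt
  exact ⟨_, h.comp_swap (Finset.mem_sdiff.mp hv).1 hwX htv (Finset.mem_filter.mp hwK).2 hpred,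
    sum_comp_swap_lt hv (fun h => (Finset.mem_sdiff.mp h).2 hwK) htv⟩

theorem exists_optimal_isSlotAssignment [IsStrictOrder V r] (hm : 1 ≤ m) (X : Finset V) :
    ∃ T σ, IsSlotAssignment r X m T σ ∧
      (∀ T' (S' : Fin T' → Finset V), IsSchedule r X m T' S' → T ≤ T') ∧
      ∀ t, (X.filter (σ · = t) \ sinks r X).card < m →
        ∀ v ∈ X \ sinks r X, t < σ v → ∃ u ∈ X, σ u = t ∧ r u v := by
  classical
  have hex := exists_isSlotAssignment (r := r) hm X
  obtain ⟨σ, hσ, hmin⟩ := (measure fun σ : V → ℕ => ∑ x ∈ X \ sinks r X, σ x).wf.has_min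
    {σ | IsSlotAssignment r X m (Nat.find hex) σ} (Nat.find_spec hex)
  refine ⟨_, σ, hσ, fun T' S' hS' => Nat.find_min' hex hS'.exists_isSlotAssignment,
    fun t hcard v hv htv => ?_⟩
  by_contra! hfree
  obtain ⟨σ', hσ', hlt⟩ := hσ.exists_sum_lt hcard hv htv hfree
  exact hmin σ' hσ' hlt

end SlotAssignment

/-- Every instance admits an optimal schedule that is sink-adjusted: (i) after
every sink moment (a slot with `0 < |H_t| < m` non-sink jobs) only successors
of jobs in that slot or sinks are scheduled, and (ii) slots consisting only of
sinks come after all non-sinks are scheduled. -/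
theorem exists_optimal_sink_adjusted
    {V : Type*} [DecidableEq V] (r : V → V → Prop) [DecidableRel r]
    (htrans : Transitive r) (hirr : Irreflexive r)
    (X : Finset V) (m : ℕ) (hm : 1 ≤ m) :
    ∃ (T : ℕ) (S : Fin T → Finset V),
      IsSchedule r X m T S ∧
      (∀ (T' : ℕ) (S' : Fin T' → Finset V), IsSchedule r X m T' S' → T ≤ T') ∧
      (∀ t : Fin T,
        0 < ((S t) \ X.filter (fun v => ∀ w ∈ X, ¬ r v w)).card →
        ((S t) \ X.filter (fun v => ∀ w ∈ X, ¬ r v w)).card < m →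
        ∀ t', t < t' → ∀ v ∈ S t',
          (∃ u ∈ S t, r u v) ∨ v ∈ X.filter (fun v => ∀ w ∈ X, ¬ r v w)) ∧
      (∀ t t' : Fin T, S t ⊆ X.filter (fun v => ∀ w ∈ X, ¬ r v w) →
        (∃ v ∈ S t', v ∉ X.filter (fun v => ∀ w ∈ X, ¬ r v w)) → t' < t) := by
  have : IsStrictOrder V r := { irrefl := hirr, trans := fun _ _ _ => @htrans _ _ _ }
  obtain ⟨T, σ, hσ, hopt, hunblocked⟩ := exists_optimal_isSlotAssignment (r := r) hm X
  refine ⟨T, _, hσ.isSchedule, hopt, fun t _ hcard t' htt' v hv => ?_,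
    fun t t' (hsinks : _ ⊆ sinks r X) ⟨v, hv, hvK⟩ => ?_⟩
  · obtain ⟨hvX, hvt'⟩ := Finset.mem_filter.mp hv
    by_cases hvK : v ∈ sinks r X
    · exact Or.inr hvK
    obtain ⟨u, huX, hut, huv⟩ :=
      hunblocked t hcard v (Finset.mem_sdiff.mpr ⟨hvX, hvK⟩) (hvt' ▸ htt')
    exact Or.inl ⟨u, Finset.mem_filter.mpr ⟨huX, hut⟩, huv⟩
  · obtain ⟨hvX, hvt'⟩ := Finset.mem_filter.mp hv
    by_contra! htt'
    have hcard : (X.filter (σ · = t) \ sinks r X).card < m := by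
      rw [Finset.sdiff_eq_empty_iff_subset.mpr hsinks, Finset.card_empty]
      exact hm
    have htv : (t : ℕ) < σ v := hvt' ▸ htt'.lt_of_ne fun h => hvK (hsinks (h ▸ hv))
    obtain ⟨u, huX, hut, huv⟩ := hunblocked t hcard v (Finset.mem_sdiff.mpr ⟨hvX, hvK⟩) htv
    exact (Finset.mem_filter.mp (hsinks (Finset.mem_filter.mpr ⟨huX, hut⟩))).2 v hvX huv
end

section
/- Let σ be a sink-adjusted m-machine schedule with sink moments z(1) < … < z(ℓ), let C be a vertex cover of the comparability graph of the jobs, and let Q be the set of non-sink jobs in C scheduled at sink moments. Then every job v ∈ Q scheduled at time t satisfies t = z(d+1) or t = z(d+2), where d is the length of the longest chain within Q ∪ {v} ending at v (measured in edges). -/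
/-- In a sink-adjusted schedule, a non-sink vertex-cover job `v ∈ Q` scheduled
at sink moments is scheduled at the `(d+1)`-st or `(d+2)`-nd sink moment, where
`d` is its depth with respect to `Q`.  (Sink moments `z 0 < z 1 < …` are
0-indexed here, so the conclusion reads `z d` or `z (d+1)`.) -/
theorem sink_moment_job_position
    {V : Type*} [DecidableEq V] (r : V → V → Prop) [DecidableRel r]
    (htrans : Transitive r) (hirr : Irreflexive r)
    (X : Finset V) (m T : ℕ) (S : Fin T → Finset V)
    (hS : IsSchedule r X m T S)
    (C : Finset V) (hC : ∀ u v, r u v → u ∈ C ∨ v ∈ C)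
    (Sk : Finset V) (hSk : ∀ v, v ∈ Sk ↔ v ∈ X ∧ ∀ w ∈ X, ¬ r v w)
    (hadj : ∀ t : Fin T, 0 < ((S t) \ Sk).card → ((S t) \ Sk).card < m →
      ∀ t', t < t' → ∀ v ∈ S t', (∃ u ∈ S t, r u v) ∨ v ∈ Sk)
    (ℓ : ℕ) (z : Fin ℓ → Fin T) (hz : StrictMono z)
    (hzsink : ∀ i, 0 < ((S (z i)) \ Sk).card ∧ ((S (z i)) \ Sk).card < m)
    (hzall : ∀ t : Fin T, 0 < ((S t) \ Sk).card → ((S t) \ Sk).card < m →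
      ∃ i, z i = t)
    (Q : Finset V)
    (hQ : ∀ v, v ∈ Q ↔ (v ∈ C ∧ v ∈ X ∧ v ∉ Sk ∧ ∃ i, v ∈ S (z i)))
    (v : V) (hv : v ∈ Q) (t : Fin T) (hvt : v ∈ S t)
    (d : ℕ)
    (hd : IsGreatest {k | ∃ c : Fin (k + 1) → V,
      (∀ i, c i ∈ insert v Q) ∧
      (∀ i j : Fin (k + 1), i < j → r (c i) (c j)) ∧
      c (Fin.last k) = v} d) :
    ∃ i : Fin ℓ, z i = t ∧ ((i : ℕ) = d ∨ (i : ℕ) = d + 1) := by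
  obtain ⟨hSsub, hSuniq, hScard, hSprec⟩ := hS
  obtain ⟨hvC, hvX, hvSk, i, hvi⟩ := (hQ v).1 hv
  have ht : z i = t := by
    obtain ⟨t', _, huni⟩ := hSuniq v hvX
    rw [huni _ hvi, huni _ hvt]
  refine ⟨i, ht, ?_⟩
  -- lower bound : d ≤ i
  have hlow : d ≤ (i : ℕ) := by
    obtain ⟨c, hcmem, hcr, hclast⟩ := hd.1
    have hex : ∀ j : Fin (d+1), ∃ idx : Fin ℓ, c j ∈ S (z idx) := by
      intro j
      by_cases hj : j = Fin.last d
      · exact ⟨i, by rw [hj, hclast]; exact hvi⟩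
      · have hjv : c j ≠ v := by
          intro h
          have hlt : j < Fin.last d := lt_of_le_of_ne (Fin.le_last j) hj
          have := hcr j (Fin.last d) hlt
          rw [h, hclast] at this
          exact hirr v this
        rcases Finset.mem_insert.mp (hcmem j) with h | h
        · exact absurd h hjv
        · obtain ⟨_, _, _, idx, hidx⟩ := (hQ (c j)).1 h
          exact ⟨idx, hidx⟩
    choose g hg using hex
    have hmono : ∀ a b : Fin (d+1), a < b → (g a : ℕ) < (g b : ℕ) := by
      intro a b hab
      have := hSprec _ _ (hcr a b hab) _ _ (hg a) (hg b)
      exact hz.lt_iff_lt.mp this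
    have hstep : ∀ k, ∀ hk : k < d+1, k ≤ (g ⟨k, hk⟩ : ℕ) := by
      intro k
      induction k with
      | zero => intro _; exact Nat.zero_le _
      | succ k ih =>
        intro hk
        have hk' : k < d + 1 := by omega
        have h1 := ih hk'
        have h2 := hmono ⟨k, hk'⟩ ⟨k+1, hk⟩ (Fin.mk_lt_mk.mpr (Nat.lt_succ_self k))
        omega
    have hlast : g (Fin.last d) = i := by
      have h1 := hg (Fin.last d)
      rw [hclast] at h1
      obtain ⟨t', _, huni⟩ := hSuniq v hvX
      have : z (g (Fin.last d)) = z i := by rw [huni _ h1, huni _ hvi]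
      exact hz.injective this
    have h3 := hstep d (Nat.lt_succ_self d)
    have h4 : (⟨d, Nat.lt_succ_self d⟩ : Fin (d+1)) = Fin.last d := rfl
    rw [h4, hlast] at h3
    exact h3
  -- backward chain construction
  have key : ∀ n, ∀ hn : n < ℓ, ∀ w, w ∈ S (z ⟨n, hn⟩) → w ∉ Sk →
      ∃ u : Fin (n+1) → V, u (Fin.last n) = w ∧
        (∀ j : Fin (n+1), (∃ idx : Fin ℓ, (idx : ℕ) = (j : ℕ) ∧ u j ∈ S (z idx)) ∧ u j ∉ Sk) ∧
        (∀ j j' : Fin (n+1), j < j' → r (u j) (u j')) := by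
    intro n
    induction n with
    | zero =>
      intro hn w hw hwSk
      refine ⟨fun _ => w, rfl, ?_, ?_⟩
      · intro j
        refine ⟨⟨⟨0, hn⟩, ?_, hw⟩, hwSk⟩
        have := j.isLt
        simp only [Fin.val_mk]
        omega
      · intro j j' hjj'
        have h1 := j.isLt
        have h2 := j'.isLt
        rw [Fin.lt_def] at hjj'
        omega
    | succ n ih =>
      intro hn w hw hwSk
      have hn' : n < ℓ := by omega
      have hlt : z ⟨n, hn'⟩ < z ⟨n+1, hn⟩ := hz (by rw [Fin.lt_def]; exact Nat.lt_succ_self n)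
      obtain ⟨hpos, hsmall⟩ := hzsink ⟨n, hn'⟩
      rcases hadj (z ⟨n, hn'⟩) hpos hsmall _ hlt w hw with ⟨w', hw'S, hw'r⟩ | hsk
      · have hwX : w ∈ X := hSsub _ hw
        have hw'Sk : w' ∉ Sk := fun h => ((hSk w').1 h).2 w hwX hw'r
        obtain ⟨u', hu'last, hu'mem, hu'r⟩ := ih hn' w' hw'S hw'Sk
        have hallr : ∀ k : Fin (n+1), r (u' k) w := by
          intro k
          by_cases hk : k = Fin.last n
          · rw [hk, hu'last]; exact hw'r
          · have := hu'r k (Fin.last n) (lt_of_le_of_ne (Fin.le_last k) hk)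
            rw [hu'last] at this
            exact htrans this hw'r
        refine ⟨Fin.snoc u' w, Fin.snoc_last _ _, ?_, ?_⟩
        · intro j
          induction j using Fin.lastCases with
          | last =>
            refine ⟨⟨⟨n+1, hn⟩, by simp, ?_⟩, ?_⟩
            · rw [Fin.snoc_last]; exact hw
            · rw [Fin.snoc_last]; exact hwSk
          | cast k =>
            obtain ⟨⟨idx, hidx1, hidx2⟩, hks⟩ := hu'mem k
            refine ⟨⟨idx, by simp [hidx1], ?_⟩, ?_⟩
            · rw [Fin.snoc_castSucc]; exact hidx2
            · rw [Fin.snoc_castSucc]; exact hks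
        · intro j j'
          induction j' using Fin.lastCases with
          | last =>
            induction j using Fin.lastCases with
            | last => intro h; exact absurd h (lt_irrefl _)
            | cast k =>
              intro _
              rw [Fin.snoc_castSucc, Fin.snoc_last]
              exact hallr k
          | cast k' =>
            induction j using Fin.lastCases with
            | last =>
              intro h
              rw [Fin.lt_def] at h
              simp only [Fin.val_last, Fin.coe_castSucc] at h
              have := k'.isLt
              omega
            | cast k =>
              intro h
              rw [Fin.snoc_castSucc, Fin.snoc_castSucc]
              exact hu'r k k' (by rwa [Fin.castSucc_lt_castSucc_iff] at h)
      · exact absurd hsk hwSk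
  obtain ⟨u, hulast, humem, hur⟩ := key (i : ℕ) i.isLt v (by simpa using hvi) hvSk
  by_cases hall : ∀ j : Fin ((i : ℕ)+1), u j ∈ C
  · -- all chain vertices in the cover : i ≤ d
    have hmemQ : ∀ j : Fin ((i : ℕ)+1), u j ∈ insert v Q := by
      intro j
      by_cases hj : u j = v
      · rw [hj]; exact Finset.mem_insert_self v Q
      · apply Finset.mem_insert_of_mem
        obtain ⟨⟨idx, _, hidx⟩, hsk⟩ := humem j
        exact (hQ (u j)).2 ⟨hall j, hSsub _ hidx, hsk, idx, hidx⟩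
    have hiQ : (i : ℕ) ∈ {k | ∃ c : Fin (k + 1) → V,
        (∀ i, c i ∈ insert v Q) ∧
        (∀ i j : Fin (k + 1), i < j → r (c i) (c j)) ∧
        c (Fin.last k) = v} := ⟨u, hmemQ, hur, hulast⟩
    have := hd.2 hiQ
    omega
  · push_neg at hall
    obtain ⟨j0, hj0⟩ := hall
    have hjuniq : ∀ j, j ≠ j0 → u j ∈ C := by
      intro j hne
      by_contra hjC
      rcases lt_trichotomy j j0 with h | h | h
      · rcases hC _ _ (hur j j0 h) with h' | h' <;> [exact hjC h'; exact hj0 h']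
      · exact hne h
      · rcases hC _ _ (hur j0 j h) with h' | h' <;> [exact hj0 h'; exact hjC h']
    have hj0last : j0 ≠ Fin.last (i : ℕ) := by
      intro h
      rw [h, hulast] at hj0
      exact hj0 hvC
    have hj0lt : (j0 : ℕ) < (i : ℕ) := by
      have h1 := j0.isLt
      have h2 : (j0 : ℕ) ≠ (i : ℕ) := by
        intro h
        exact hj0last (Fin.ext (by simp [Fin.val_last, h]))
      omega
    have hmm : ∀ j : Fin ((i : ℕ)+1), j ≠ j0 → u j ∈ insert v Q := by
      intro j hne
      by_cases hj : u j = v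
      · rw [hj]; exact Finset.mem_insert_self v Q
      · apply Finset.mem_insert_of_mem
        obtain ⟨⟨idx, _, hidx⟩, hsk⟩ := humem j
        exact (hQ (u j)).2 ⟨hjuniq j hne, hSsub _ hidx, hsk, idx, hidx⟩
    have husame : ∀ j : Fin ((i : ℕ)+1), (j : ℕ) = (i : ℕ) → u j = v := by
      intro j hj
      have hje : j = Fin.last (i : ℕ) := Fin.ext (by simp [Fin.val_last, hj])
      rw [hje, hulast]
    have hkmem : ((i : ℕ) - 1) ∈ {k | ∃ c : Fin (k + 1) → V,
        (∀ i, c i ∈ insert v Q) ∧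
        (∀ i j : Fin (k + 1), i < j → r (c i) (c j)) ∧
        c (Fin.last k) = v} := by
      refine ⟨fun a => u ⟨if (a : ℕ) < (j0 : ℕ) then (a : ℕ) else (a : ℕ) + 1,
        by have := a.isLt; split <;> omega⟩, ?_, ?_, ?_⟩
      · intro a
        apply hmm
        apply Fin.ne_of_val_ne
        simp only [Fin.val_mk]
        split <;> omega
      · intro a b hab
        apply hur
        rw [Fin.lt_def] at hab ⊢
        simp only [Fin.val_mk]
        split <;> split <;> omega
      · apply husame
        simp only [Fin.val_mk, Fin.val_last]
        rw [if_neg (by omega)]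
        omega
    have := hd.2 hkmem
    omega
end

section
/- Let σ be a sink-adjusted m-machine schedule with sink moments z(1) < … < z(ℓ) (set z(0)=0, z(ℓ+1)=T+1), C a vertex cover of the comparability graph, Q the set of non-sink jobs in C at sink moments. Then every non-sink job v ∉ C scheduled at time t satisfies z(d) < t ≤ z(d+1), where d = depth of v with respect to Q. -/
/-- In a sink-adjusted schedule, a non-sink job `v ∉ C` scheduled at (1-indexed)
time `t` satisfies `z(d) < t ≤ z(d+1)`, where `d` is its depth w.r.t. the set
`Q` of non-sink vertex-cover jobs at sink moments, and `zt` is the 1-indexed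
sink-moment sequence extended by `zt 0 = 0` and `zt (ℓ+1) = T + 1`. -/
theorem non_cover_job_position
    {V : Type*} [DecidableEq V] (r : V → V → Prop) [DecidableRel r]
    (htrans : Transitive r) (hirr : Irreflexive r)
    (X : Finset V) (m T : ℕ) (S : Fin T → Finset V)
    (hS : IsSchedule r X m T S)
    (C : Finset V) (hC : ∀ u v, r u v → u ∈ C ∨ v ∈ C)
    (Sk : Finset V) (hSk : ∀ v, v ∈ Sk ↔ v ∈ X ∧ ∀ w ∈ X, ¬ r v w)
    (hadj : ∀ t : Fin T, 0 < ((S t) \ Sk).card → ((S t) \ Sk).card < m →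
      ∀ t', t < t' → ∀ v ∈ S t', (∃ u ∈ S t, r u v) ∨ v ∈ Sk)
    (ℓ : ℕ) (z : Fin ℓ → Fin T) (hz : StrictMono z)
    (hzsink : ∀ i, 0 < ((S (z i)) \ Sk).card ∧ ((S (z i)) \ Sk).card < m)
    (hzall : ∀ t : Fin T, 0 < ((S t) \ Sk).card → ((S t) \ Sk).card < m →
      ∃ i, z i = t)
    (Q : Finset V)
    (hQ : ∀ v, v ∈ Q ↔ (v ∈ C ∧ v ∈ X ∧ v ∉ Sk ∧ ∃ i, v ∈ S (z i)))
    (zt : ℕ → ℕ) (hzt0 : zt 0 = 0)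
    (hzts : ∀ i : Fin ℓ, zt ((i : ℕ) + 1) = (z i : ℕ) + 1)
    (hzttop : zt (ℓ + 1) = T + 1)
    (v : V) (hvX : v ∈ X) (hvC : v ∉ C) (hvSk : v ∉ Sk)
    (t : Fin T) (hvt : v ∈ S t)
    (d : ℕ)
    (hd : IsGreatest {k | ∃ c : Fin (k + 1) → V,
      (∀ i, c i ∈ insert v Q) ∧
      (∀ i j : Fin (k + 1), i < j → r (c i) (c j)) ∧
      c (Fin.last k) = v} d) :
    zt d < (t : ℕ) + 1 ∧ (t : ℕ) + 1 ≤ zt (d + 1) := by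
  obtain ⟨⟨c, hcmem, hcrel, hclast⟩, hmax⟩ := hd
  obtain ⟨hSX, hSuniq, hScard, hSprec⟩ := hS
  -- every non-last element of the maximum chain is in Q
  have hcQ : ∀ i : Fin (d + 1), i ≠ Fin.last d → c i ∈ Q := by
    intro i hi
    rcases Finset.mem_insert.mp (hcmem i) with h | h
    · exfalso
      have hlt : i < Fin.last d := lt_of_le_of_ne (Fin.le_last i) hi
      have := hcrel i (Fin.last d) hlt
      rw [hclast, h] at this
      exact hirr v this
    · exact h
  -- Part A : d ≤ ℓ and zt d ≤ t
  have partA : d ≤ ℓ ∧ zt d < (t : ℕ) + 1 := by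
    rcases Nat.eq_zero_or_pos d with h0 | hpos
    · subst h0; exact ⟨Nat.zero_le _, by simp [hzt0]⟩
    · have hj : ∀ i : Fin d, ∃ jj : Fin ℓ, c i.castSucc ∈ S (z jj) := by
        intro i
        have hne : i.castSucc ≠ Fin.last d := (Fin.castSucc_lt_last i).ne
        obtain ⟨-, -, -, jj, hjj⟩ := (hQ _).mp (hcQ _ hne)
        exact ⟨jj, hjj⟩
      choose j hjmem using hj
      have hjmono : ∀ i i' : Fin d, i < i' → j i < j i' := by
        intro i i' hii
        have hr : r (c i.castSucc) (c i'.castSucc) :=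
          hcrel _ _ (Fin.castSucc_lt_castSucc_iff.mpr hii)
        exact hz.lt_iff_lt.mp (hSprec _ _ hr _ _ (hjmem i) (hjmem i'))
      have hjge : ∀ k : ℕ, ∀ h : k < d, k ≤ (j ⟨k, h⟩ : ℕ) := by
        intro k
        induction k with
        | zero => intro h; exact Nat.zero_le _
        | succ n ihn =>
          intro h
          have h1 : n < d := by omega
          have h2 : j ⟨n, h1⟩ < j ⟨n + 1, h⟩ :=
            hjmono _ _ (by simp [Fin.lt_def])
          have h2' : (j ⟨n, h1⟩ : ℕ) < (j ⟨n + 1, h⟩ : ℕ) := h2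
          have := ihn h1
          omega
      have hd1 : d - 1 < d := by omega
      have hjd := hjge (d - 1) hd1
      have hdl : d - 1 < ℓ := lt_of_le_of_lt hjd (j _).isLt
      have hdle : d ≤ ℓ := by omega
      have hmono : (z ⟨d - 1, hdl⟩ : ℕ) ≤ (z (j ⟨d - 1, hd1⟩) : ℕ) :=
        hz.monotone (show (⟨d - 1, hdl⟩ : Fin ℓ) ≤ j ⟨d - 1, hd1⟩ from hjd)
      have hrlast : r (c (⟨d - 1, hd1⟩ : Fin d).castSucc) v := by
        have := hcrel _ _ (Fin.castSucc_lt_last (⟨d - 1, hd1⟩ : Fin d))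
        rwa [hclast] at this
      have hlt : z (j ⟨d - 1, hd1⟩) < t := hSprec _ _ hrlast _ _ (hjmem _) hvt
      have hlt' : (z (j ⟨d - 1, hd1⟩) : ℕ) < (t : ℕ) := hlt
      have hzt : zt (d - 1 + 1) = (z ⟨d - 1, hdl⟩ : ℕ) + 1 := hzts ⟨d - 1, hdl⟩
      have hd' : d - 1 + 1 = d := by omega
      rw [hd'] at hzt
      exact ⟨hdle, by omega⟩
  refine ⟨partA.2, ?_⟩
  -- Part B : upper bound
  rcases eq_or_lt_of_le partA.1 with heq | hdlt
  · subst heq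
    rw [hzttop]
    have := t.isLt
    omega
  · by_contra hcon
    push_neg at hcon
    have hztd : zt (d + 1) = (z ⟨d, hdlt⟩ : ℕ) + 1 := hzts ⟨d, hdlt⟩
    rw [hztd] at hcon
    have hzdt : z ⟨d, hdlt⟩ < t := by
      rw [Fin.lt_def]; omega
    -- build a chain of length d+1 ending just before v through all sink moments
    have key : ∀ k : ℕ, k ≤ d → ∃ u : Fin (k + 1) → V,
        (∀ (i : Fin (k + 1)) (n : Fin ℓ), (n : ℕ) = d - k + (i : ℕ) → u i ∈ S (z n)) ∧
        (∀ i j : Fin (k + 1), i < j → r (u i) (u j)) ∧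
        r (u (Fin.last k)) v := by
      intro k
      induction k with
      | zero =>
        intro _
        rcases hadj (z ⟨d, hdlt⟩) (hzsink _).1 (hzsink _).2 t hzdt v hvt with
          ⟨u0, hu0S, hu0r⟩ | hsk
        · refine ⟨fun _ => u0, ?_, ?_, hu0r⟩
          · intro i n hn
            have hi0 : (i : ℕ) = 0 := Nat.lt_one_iff.mp i.isLt
            have : n = ⟨d, hdlt⟩ := Fin.ext (show (n : ℕ) = d by omega)
            rw [this]; exact hu0S
          · intro i j hij
            have hi := i.isLt
            have hj := j.isLt
            have : i = j := Fin.ext (by omega)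
            subst this
            exact absurd hij (lt_irrefl _)
        · exact absurd hsk hvSk
      | succ k ih =>
        intro hk
        obtain ⟨u, huS, hur, hulast⟩ := ih (by omega)
        have hu0v : r (u 0) v := by
          rcases Nat.eq_zero_or_pos k with hk0 | hk0
          · subst hk0
            have : (0 : Fin 1) = Fin.last 0 := Fin.ext rfl
            rw [this]; exact hulast
          · refine htrans (hur 0 (Fin.last k) ?_) hulast
            rw [Fin.lt_def]
            simpa using hk0
        have hu0Sk : u 0 ∉ Sk := fun hs => ((hSk (u 0)).mp hs).2 v hvX hu0v
        have hdk : d - k < ℓ := by omega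
        have hdk1 : d - (k + 1) < ℓ := by omega
        have hu0mem : u 0 ∈ S (z ⟨d - k, hdk⟩) := huS 0 ⟨d - k, hdk⟩ (by simp)
        have hlt : z ⟨d - (k + 1), hdk1⟩ < z ⟨d - k, hdk⟩ :=
          hz (Fin.mk_lt_mk.mpr (by omega))
        rcases hadj (z ⟨d - (k + 1), hdk1⟩) (hzsink _).1 (hzsink _).2
            (z ⟨d - k, hdk⟩) hlt (u 0) hu0mem with ⟨u', hu'S, hu'r⟩ | hsk
        · refine ⟨Fin.cons u' u, ?_, ?_, ?_⟩
          · intro i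
            induction i using Fin.cases with
            | zero =>
              intro n hn
              have : n = ⟨d - (k + 1), hdk1⟩ := Fin.ext (by simpa using hn)
              rw [this, Fin.cons_zero]; exact hu'S
            | succ i =>
              intro n hn
              rw [Fin.cons_succ]
              refine huS i n ?_
              simp only [Fin.val_succ] at hn
              omega
          · intro i j
            induction j using Fin.cases with
            | zero =>
              intro hij
              exact absurd hij (Fin.not_lt_zero _)
            | succ j =>
              induction i using Fin.cases with
              | zero =>
                intro _
                rw [Fin.cons_zero, Fin.cons_succ]
                rcases Nat.eq_zero_or_pos (j : ℕ) with hj0 | hj0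
                · have : j = 0 := Fin.ext hj0
                  rw [this]; exact hu'r
                · refine htrans hu'r (hur 0 j ?_)
                  rw [Fin.lt_def]; simpa using hj0
              | succ i =>
                intro hij
                rw [Fin.cons_succ, Fin.cons_succ]
                exact hur i j (Fin.succ_lt_succ_iff.mp hij)
          · rw [← Fin.succ_last, Fin.cons_succ]
            exact hulast
        · exact absurd hsk hu0Sk
    obtain ⟨u, huS, hur, hulast⟩ := key d le_rfl
    have hurv : ∀ i : Fin (d + 1), r (u i) v := by
      intro i
      rcases eq_or_lt_of_le (Fin.le_last i) with hl | hl
      · rw [hl]; exact hulast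
      · exact htrans (hur i (Fin.last d) hl) hulast
    have huQ : ∀ i : Fin (d + 1), u i ∈ Q := by
      intro i
      have hi : (i : ℕ) < ℓ := by have := i.isLt; omega
      have hmem : u i ∈ S (z ⟨(i : ℕ), hi⟩) := huS i ⟨(i : ℕ), hi⟩ (by simp)
      refine (hQ _).mpr ⟨?_, hSX _ hmem, ?_, ⟨_, hmem⟩⟩
      · rcases hC _ _ (hurv i) with h | h
        · exact h
        · exact absurd h hvC
      · intro hs
        exact ((hSk _).mp hs).2 v hvX (hurv i)
    have h1 : ∀ i : Fin (d + 1 + 1), (Fin.snoc u v : Fin (d + 1 + 1) → V) i ∈ insert v Q := by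
      intro i
      induction i using Fin.lastCases with
      | last => rw [Fin.snoc_last]; exact Finset.mem_insert_self v Q
      | cast i => rw [Fin.snoc_castSucc]; exact Finset.mem_insert_of_mem (huQ i)
    have h2 : ∀ j i : Fin (d + 1 + 1), i < j →
        r ((Fin.snoc u v : Fin (d + 1 + 1) → V) i)
          ((Fin.snoc u v : Fin (d + 1 + 1) → V) j) := by
      intro j
      induction j using Fin.lastCases with
      | last =>
        intro i
        induction i using Fin.lastCases with
        | last => intro hij; exact absurd hij (lt_irrefl _)
        | cast i =>
          intro _
          rw [Fin.snoc_castSucc, Fin.snoc_last]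
          exact hurv i
      | cast j =>
        intro i
        induction i using Fin.lastCases with
        | last => intro hij; exact absurd hij (Fin.castSucc_lt_last j).asymm
        | cast i =>
          intro hij
          rw [Fin.snoc_castSucc, Fin.snoc_castSucc]
          exact hur i j (Fin.castSucc_lt_castSucc_iff.mp hij)
    have hmem : ∃ c : Fin (d + 1 + 1) → V,
        (∀ i, c i ∈ insert v Q) ∧
        (∀ i j : Fin (d + 1 + 1), i < j → r (c i) (c j)) ∧
        c (Fin.last (d + 1)) = v := by
      refine ⟨(Fin.snoc u v : Fin (d + 1 + 1) → V), h1,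
        fun i j hij => h2 j i hij, ?_⟩
      simp
    have : d + 1 ≤ d := hmax hmem
    omega
end

section
/- Let G be a transitively closed DAG on n jobs with no isolated vertices, m ≥ 1, and suppose G has at most m sources. Then G admits a feasible m-machine schedule of makespan T if and only if the graph obtained by deleting all sources admits a feasible m-machine schedule of makespan T − 1 (for T ≥ 1). -/
namespace IsSchedule

variable {V : Type*} [DecidableEq V] {r : V → V → Prop} {X : Finset V} {m T : ℕ}

theorem sdiff {S : Fin T → Finset V} (hS : IsSchedule r X m T S) (A : Finset V) :
    IsSchedule r (X \ A) m T (fun t => S t \ A) := by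
  obtain ⟨hsub, huniq, hcard, hprec⟩ := hS
  refine ⟨fun t => Finset.sdiff_subset_sdiff (hsub t) le_rfl, fun v hv => ?_,
    fun t => (Finset.card_le_card Finset.sdiff_subset).trans (hcard t),
    fun u v huv t t' hu hv => hprec u v huv t t' (Finset.mem_sdiff.1 hu).1
      (Finset.mem_sdiff.1 hv).1⟩
  obtain ⟨hvX, hvA⟩ := Finset.mem_sdiff.1 hv
  obtain ⟨t, ht, hunique⟩ := huniq v hvX
  exact ⟨t, Finset.mem_sdiff.2 ⟨ht, hvA⟩, fun t' ht' => hunique t' (Finset.mem_sdiff.1 ht').1⟩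

theorem not_rel_of_mem_zero {S : Fin (T + 1) → Finset V} (hS : IsSchedule r X m (T + 1) S)
    {u v : V} (hv : v ∈ S 0) (hu : u ∈ X) : ¬ r u v := fun huv => by
  obtain ⟨t, ht, -⟩ := hS.2.1 u hu
  exact Fin.not_lt_zero t (hS.2.2.2 u v huv t 0 ht hv)

theorem tail {S : Fin (T + 1) → Finset V} (hS : IsSchedule r X m (T + 1) S) (h0 : S 0 = ∅) :
    IsSchedule r X m T (Fin.tail S) := by
  obtain ⟨hsub, huniq, hcard, hprec⟩ := hS
  refine ⟨fun t => hsub t.succ, fun v hv => ?_, fun t => hcard t.succ,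
    fun u v huv t t' hu hv => Fin.succ_lt_succ_iff.1 (hprec u v huv _ _ hu hv)⟩
  obtain ⟨t, ht, hunique⟩ := huniq v hv
  cases t using Fin.cases with
  | zero => simp [h0] at ht
  | succ s => exact ⟨s, ht, fun s' hs' => Fin.succ_injective _ (hunique _ hs')⟩

theorem cons {A : Finset V} {S : Fin T → Finset V} (hS : IsSchedule r (X \ A) m T S)
    (hAX : A ⊆ X) (hA : A.card ≤ m) (hfirst : ∀ u ∈ X, ∀ v ∈ A, ¬ r u v) :
    IsSchedule r X m (T + 1) (Fin.cons A S : Fin (T + 1) → Finset V) := by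
  obtain ⟨hsub, huniq, hcard, hprec⟩ := hS
  have hsub' : ∀ t, (Fin.cons A S : Fin (T + 1) → Finset V) t ⊆ X := by
    intro t
    cases t using Fin.cases with
    | zero => exact hAX
    | succ s => exact (hsub s).trans Finset.sdiff_subset
  refine ⟨hsub', fun v hv => ?_, fun t => ?_, fun u v huv t t' hu hv => ?_⟩
  · by_cases hvA : v ∈ A
    · refine ⟨0, hvA, fun t ht => ?_⟩
      cases t using Fin.cases with
      | zero => rfl
      | succ s => exact absurd hvA (Finset.mem_sdiff.1 (hsub s ht)).2
    · obtain ⟨t, ht, hunique⟩ := huniq v (Finset.mem_sdiff.2 ⟨hv, hvA⟩)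
      refine ⟨t.succ, ht, fun t' ht' => ?_⟩
      cases t' using Fin.cases with
      | zero => exact absurd ht' hvA
      | succ s => exact congrArg Fin.succ (hunique s ht')
  · cases t using Fin.cases with
    | zero => exact hA
    | succ s => exact hcard s
  · cases t' using Fin.cases with
    | zero => exact absurd huv (hfirst u (hsub' t hu) v hv)
    | succ s' =>
      cases t using Fin.cases with
      | zero => exact Fin.succ_pos s'
      | succ s => exact Fin.succ_lt_succ_iff.2 (hprec u v huv s s' hu hv)

end IsSchedule

theorem delete_sources_schedule_iff_general
    {V : Type*} [DecidableEq V] (r : V → V → Prop)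
    (X : Finset V)
    (m T : ℕ) (hT : 1 ≤ T)
    (Src : Finset V) (hSrc : ∀ v, v ∈ Src ↔ v ∈ X ∧ ∀ u ∈ X, ¬ r u v)
    (hcard : Src.card ≤ m) :
    (∃ S : Fin T → Finset V, IsSchedule r X m T S) ↔
      ∃ S' : Fin (T - 1) → Finset V, IsSchedule r (X \ Src) m (T - 1) S' := by
  obtain ⟨T, rfl⟩ := Nat.exists_eq_add_of_le' hT
  rw [Nat.add_sub_cancel]
  constructor
  · rintro ⟨S, hS⟩
    have hzero : S 0 \ Src = ∅ := Finset.sdiff_eq_empty_iff_subset.2 fun v hv =>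
      (hSrc v).2 ⟨hS.1 0 hv, fun u hu => hS.not_rel_of_mem_zero hv hu⟩
    exact ⟨_, (hS.sdiff Src).tail hzero⟩
  · rintro ⟨S', hS'⟩
    exact ⟨_, hS'.cons (fun v hv => ((hSrc v).1 hv).1) hcard
      fun u hu v hv => ((hSrc v).1 hv).2 u hu⟩

/-- Reduction rule: if a transitively closed DAG without isolated vertices has
at most `m` sources, then it is schedulable with makespan `T` iff deleting all
sources leaves a set schedulable with makespan `T - 1`. -/
theorem delete_sources_schedule_iff
    {V : Type*} [DecidableEq V] (r : V → V → Prop)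
    (htrans : Transitive r) (hirr : Irreflexive r)
    (X : Finset V) (hniso : ∀ v ∈ X, ∃ u ∈ X, r u v ∨ r v u)
    (m T : ℕ) (hm : 1 ≤ m) (hT : 1 ≤ T)
    (Src : Finset V) (hSrc : ∀ v, v ∈ Src ↔ v ∈ X ∧ ∀ u ∈ X, ¬ r u v)
    (hcard : Src.card ≤ m) :
    (∃ S : Fin T → Finset V, IsSchedule r X m T S) ↔
      ∃ S' : Fin (T - 1) → Finset V, IsSchedule r (X \ Src) m (T - 1) S' :=
  delete_sources_schedule_iff_general r X m T hT Src hSrc hcard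
end

section
/- Let G be a DAG on a job set V with n = |V| jobs, and suppose n ≤ m·T. If the induced subgraph on the non-isolated vertices of G admits a feasible m-machine schedule of makespan at most T, then G admits a feasible m-machine schedule of makespan at most T. -/
/-- Reduction rule: if `|X| ≤ m·T` and the non-isolated jobs admit a feasible
`m`-machine schedule of makespan `T`, then so does the whole job set `X`. -/
theorem insert_isolated_jobs
    {V : Type*} [DecidableEq V] (r : V → V → Prop)
    (X : Finset V) (m T : ℕ) (hn : X.card ≤ m * T)
    (X' : Finset V)
    (hX' : ∀ v, v ∈ X' ↔ v ∈ X ∧ ∃ u ∈ X, r u v ∨ r v u)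
    (hsched : ∃ S : Fin T → Finset V, IsSchedule r X' m T S) :
    ∃ S : Fin T → Finset V, IsSchedule r X m T S := by
  classical
  have hX'sub : X' ⊆ X := fun v hv => ((hX' v).1 hv).1
  have key : ∀ D : Finset V, D ⊆ X → (∀ a ∈ D, a ∉ X') →
      ∃ S : Fin T → Finset V, IsSchedule r (X' ∪ D) m T S := by
    intro D
    induction D using Finset.induction_on with
    | empty => intro _ _; simpa using hsched
    | @insert a D ha ih =>
      intro hsub hni
      obtain ⟨S, hSsub, hSuniq, hScard, hSprec⟩ :=
        ih (fun x hx => hsub (Finset.mem_insert_of_mem hx))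
          (fun x hx => hni x (Finset.mem_insert_of_mem hx))
      set Y := X' ∪ D with hY
      have haX : a ∈ X := hsub (Finset.mem_insert_self a D)
      have haY : a ∉ Y := by
        simp only [hY, Finset.mem_union, not_or]
        exact ⟨hni a (Finset.mem_insert_self a D), ha⟩
      have hYX : Y ⊆ X :=
        Finset.union_subset hX'sub (fun x hx => hsub (Finset.mem_insert_of_mem hx))
      have haS : ∀ t, a ∉ S t := fun t h => haY (hSsub t h)
      have hiso : ∀ u ∈ X, ¬(r u a ∨ r a u) := by
        intro u hu h
        exact hni a (Finset.mem_insert_self a D) ((hX' a).2 ⟨haX, u, hu, h⟩)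
      have hYeq : Y = Finset.univ.biUnion S := by
        ext v
        simp only [Finset.mem_biUnion, Finset.mem_univ, true_and]
        constructor
        · intro hv; obtain ⟨t, ht, _⟩ := hSuniq v hv; exact ⟨t, ht⟩
        · rintro ⟨t, ht⟩; exact hSsub t ht
      have hcard : Y.card = ∑ t, (S t).card := by
        rw [hYeq, Finset.card_biUnion]
        intro t _ t' _ htt'
        refine Finset.disjoint_left.mpr fun v hv hv' => htt' ?_
        obtain ⟨s, _, hu⟩ := hSuniq v (hSsub t hv)
        exact (hu t hv).trans (hu t' hv').symm
      have hYlt : Y.card < m * T := by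
        have h1 : (insert a Y).card ≤ X.card :=
          Finset.card_le_card (Finset.insert_subset haX hYX)
        rw [Finset.card_insert_of_notMem haY] at h1
        omega
      have hsum : ∑ t : Fin T, (S t).card < ∑ _t : Fin T, m := by
        rw [← hcard]
        simpa [Finset.sum_const, Finset.card_univ, Nat.mul_comm] using hYlt
      obtain ⟨t0, -, ht0⟩ := Finset.exists_lt_of_sum_lt hsum
      have hset : X' ∪ insert a D = insert a Y := by
        rw [hY]; ext v
        simp only [Finset.mem_union, Finset.mem_insert]; tauto
      have hmem : ∀ v t, v ∈ Function.update S t0 (insert a (S t0)) t ↔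
          (t = t0 ∧ v = a) ∨ v ∈ S t := by
        intro v t
        by_cases h : t = t0
        · subst h
          simp only [Function.update_self, Finset.mem_insert]
          tauto
        · simp only [Function.update_of_ne h]
          tauto
      rw [hset]
      refine ⟨Function.update S t0 (insert a (S t0)), ?_, ?_, ?_, ?_⟩
      · intro t v hv
        rcases (hmem v t).1 hv with ⟨_, rfl⟩ | hv'
        · exact Finset.mem_insert_self _ _
        · exact Finset.mem_insert_of_mem (hSsub t hv')
      · intro v hv
        rcases Finset.mem_insert.mp hv with rfl | hv'
        · refine ⟨t0, (hmem v t0).2 (Or.inl ⟨rfl, rfl⟩), fun t ht => ?_⟩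
          rcases (hmem v t).1 ht with ⟨h1, _⟩ | h2
          · exact h1
          · exact absurd h2 (haS t)
        · obtain ⟨t, ht, hu⟩ := hSuniq v hv'
          refine ⟨t, (hmem v t).2 (Or.inr ht), fun t' ht' => ?_⟩
          rcases (hmem v t').1 ht' with ⟨_, rfl⟩ | h2
          · exact absurd hv' haY
          · exact hu t' h2
      · intro t
        by_cases h : t = t0
        · subst h
          rw [Function.update_self, Finset.card_insert_of_notMem (haS _)]
          omega
        · rw [Function.update_of_ne h]; exact hScard t
      · intro u v huv t t' hu hv
        rcases (hmem u t).1 hu with ⟨_, rfl⟩ | hu'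
        · exfalso
          rcases (hmem v t').1 hv with ⟨_, rfl⟩ | hv'
          · exact hiso v haX (Or.inr huv)
          · exact hiso v (hYX (hSsub t' hv')) (Or.inr huv)
        · rcases (hmem v t').1 hv with ⟨_, rfl⟩ | hv'
          · exact absurd (Or.inl huv) (hiso u (hYX (hSsub t hu')))
          · exact hSprec u v huv t t' hu' hv'
  obtain ⟨S, hS⟩ := key (X \ X') (Finset.sdiff_subset) (fun a haD => (Finset.mem_sdiff.mp haD).2)
  rw [Finset.union_sdiff_of_subset hX'sub] at hS
  exact ⟨S, hS⟩
end
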